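/- When all rates r_i and capacities u_e are integers and the objective is (1-w)∑ c_e x_e + w ∑ φ_i(load_i(x)) with each φ_i piecewise-linear convex with integral breakpoints, there exists an optimal solution in which every edge flow x_e is an integer. -/

import Mathlib

/-!
A feasible point with a fractional edge flow can be moved along a nonzero direction that is
supported on the fractional edges, keeps conservation on `S` and keeps every integral load fixed.
Such a direction exists because these constraints form a network matrix, which is totally
unimodular: were the fractional flows the unique solution of the constraints, they would be
integral. Along this line every load stays in a cell where the penalties are affine until some
fractional flow or load reaches an integer, so one of the two directions does not increase the
cost and makes one more coordinate integral. Iterating rounds every feasible point to an integral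
one of no larger cost, and the finitely many integral feasible points contain a minimiser.
-/

open Finset Matrix

lemma Int.mem_range_signType_cast_iff {x : ℤ} :
    x ∈ Set.range SignType.cast ↔ x = 0 ∨ x = 1 ∨ x = -1 := by
  constructor
  · rintro ⟨s, rfl⟩
    cases s <;> simp
  · rintro (rfl | rfl | rfl)
    exacts [⟨0, rfl⟩, ⟨1, rfl⟩, ⟨-1, rfl⟩]

theorem Matrix.det_mem_range_signType_cast_of_network {k : ℕ} (M : Matrix (Fin k) (Fin k) ℤ)
    (hM : ∀ i j, M i j = 0 ∨ M i j = 1 ∨ M i j = -1)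
    (hpos : ∀ j, {i | M i j = 1}.Subsingleton) (hneg : ∀ j, {i | M i j = -1}.Subsingleton) :
    M.det ∈ Set.range SignType.cast := by
  induction k with
  | zero => exact ⟨1, by simp⟩
  | succ k ih =>
    by_cases hsparse : ∃ j i₀, ∀ i, i ≠ i₀ → M i j = 0
    · obtain ⟨j, i₀, hj⟩ := hsparse
      rw [det_succ_column M j, Fintype.sum_eq_single i₀ fun i hi => by simp [hj i hi]]
      change _ ∈ MonoidHom.mrange SignType.castHom.toMonoidHom
      refine mul_mem (mul_mem (pow_mem ?_ _) (Int.mem_range_signType_cast_iff.2 (hM i₀ j)))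
        (ih _ (fun _ _ => hM _ _) (fun _ => (hpos _).preimage Fin.succAbove_right_injective)
          (fun _ => (hneg _).preimage Fin.succAbove_right_injective))
      exact ⟨-1, by simp⟩
    -- otherwise every column holds both a `1` and a `-1`, so the rows sum to zero
    · push Not at hsparse
      have hmem : ∀ j (s : ℤ), s = 1 ∨ s = -1 → ∃ i, M i j = s := by
        intro j s hs
        by_contra! hnone
        obtain ⟨i₁, -, h₁⟩ := hsparse j 0
        obtain ⟨i₂, h₂₁, h₂⟩ := hsparse j i₁
        have hval : ∀ i, M i j ≠ 0 → M i j = -s := by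
          intro i hi
          have := hnone i
          rcases hM i j with h | h | h <;> rcases hs with rfl | rfl <;> simp_all
        rcases hs with rfl | rfl
        · exact h₂₁ (hneg j (hval i₂ h₂) (by simpa using hval i₁ h₁))
        · exact h₂₁ (hpos j (by simpa using hval i₂ h₂) (by simpa using hval i₁ h₁))
      have hcol : ∀ j, ∑ i, M i j = 0 := by
        intro j
        obtain ⟨ip, hip⟩ := hmem j 1 (by simp)
        obtain ⟨in_, hin⟩ := hmem j (-1) (by simp)
        rw [Fintype.sum_eq_add ip in_ (fun h => by simp [h, hin] at hip), hip, hin]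
        · rfl
        rintro i ⟨hp, hn⟩
        rcases hM i j with h | h | h
        exacts [h, absurd (hpos j h hip) hp, absurd (hneg j h hin) hn]
      refine ⟨0, (exists_vecMul_eq_zero_iff.mp ⟨1, one_ne_zero, ?_⟩).symm⟩
      funext j
      simpa [vecMul, dotProduct] using hcol j

section Incidence

variable {E P : Type*} [DecidableEq P]

def nodeSum [Fintype E] (p : E → P) (x : E → ℝ) (v : P) : ℝ :=
  ∑ e ∈ univ.filter (fun e => p e = v), x e

def incidence (π η : E → P) : Matrix P E ℤ :=
  fun v e => (if π e = v then 1 else 0) - (if η e = v then 1 else 0)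

theorem incidence_isTotallyUnimodular (π η : E → P) : (incidence π η).IsTotallyUnimodular := by
  intro k f g hf _
  refine det_mem_range_signType_cast_of_network _ (fun i j => ?_) (fun j i hi i' hi' => ?_)
    (fun j i hi i' hi' => ?_)
  · simp only [submatrix_apply, incidence]
    split_ifs <;> simp
  all_goals
    simp only [Set.mem_ofPred_eq, submatrix_apply, incidence] at hi hi'
    apply hf
    split_ifs at hi hi' <;> simp_all

lemma incidence_map_mulVec [Fintype E] (π η : E → P) (x : E → ℝ) (v : P) :
    ((incidence π η).map (Int.cast : ℤ → ℝ) *ᵥ x) v = nodeSum π x v - nodeSum η x v := by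
  simp only [mulVec, dotProduct, map_apply, incidence, nodeSum, sum_filter, ← sum_sub_distrib]
  refine sum_congr rfl fun e _ => ?_
  split_ifs <;> simp

lemma nodeSum_add_smul [Fintype E] (p : E → P) (x D : E → ℝ) (t : ℝ) (v : P) :
    nodeSum p (x + t • D) v = nodeSum p x v + t * nodeSum p D v := by
  simp [nodeSum, sum_add_distrib, mul_sum]

end Incidence

theorem Matrix.exists_submatrix_det_ne_zero {m n K : Type*} [Field K] [Fintype m] [Fintype n]
    [DecidableEq n] (A : Matrix m n K) (hA : ∀ v, A *ᵥ v = 0 → v = 0) :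
    ∃ f : n → m, (A.submatrix f id).det ≠ 0 := by
  have hinj : Function.Injective A.mulVecLin := by
    rw [← LinearMap.ker_eq_bot, LinearMap.ker_eq_bot']
    exact hA
  have hspan : Submodule.span K (Set.range A.row) = ⊤ := by
    apply Submodule.eq_top_of_finrank_eq
    rw [← rank_eq_finrank_span_row, rank, LinearMap.finrank_range_of_inj hinj]
  obtain ⟨κ, a, ha, hspan_a, hli⟩ := exists_linearIndependent' K A.row
  rw [hspan] at hspan_a
  have : Fintype κ := Fintype.ofInjective a ha
  let b := Module.Basis.mk hli hspan_a.ge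
  let e : n ≃ κ := Fintype.equivOfCardEq (by
    rw [← Module.finrank_eq_card_basis b, Module.finrank_fintype_fun_eq_card])
  refine ⟨a ∘ e, (isUnit_iff_ne_zero.mp ?_)⟩
  rw [← isUnit_iff_isUnit_det, ← linearIndependent_rows_iff_isUnit]
  exact hli.comp e e.injective

theorem Matrix.IsTotallyUnimodular.exists_intCast_eq {m n : Type*} [Fintype m] [Fintype n]
    [DecidableEq n] {N : Matrix m n ℤ} (hN : N.IsTotallyUnimodular)
    (hker : ∀ v, N.map (Int.cast : ℤ → ℝ) *ᵥ v = 0 → v = 0) {x : n → ℝ}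
    (hx : ∀ i, ∃ z : ℤ, (N.map (Int.cast : ℤ → ℝ) *ᵥ x) i = z) :
    ∀ j, ∃ z : ℤ, x j = z := by
  choose b hb using hx
  obtain ⟨f, hf⟩ := (N.map (Int.cast : ℤ → ℝ)).exists_submatrix_det_ne_zero hker
  set B := N.submatrix f id
  have hBdet : IsUnit B.det := by
    have hB0 : B.det ≠ 0 := fun h => hf (by
      rw [show (N.map Int.cast).submatrix f id = B.map Int.cast from rfl, ← Int.cast_det, h,
        Int.cast_zero])
    obtain ⟨s, hs⟩ := (isTotallyUnimodular_iff_fintype N).1 hN n f id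
    rw [Int.isUnit_iff]
    rcases s with _ | _ | _
    exacts [absurd hs.symm hB0, Or.inr hs.symm, Or.inl hs.symm]
  have hinv : (B⁻¹).map (Int.cast : ℤ → ℝ) * B.map Int.cast = 1 := by
    have h := congrArg (Int.castRingHom ℝ).mapMatrix (nonsing_inv_mul B hBdet)
    rwa [map_mul, map_one] at h
  intro j
  refine ⟨(B⁻¹ *ᵥ (b ∘ f)) j, ?_⟩
  have hBx : B.map (Int.cast : ℤ → ℝ) *ᵥ x = fun i => (b (f i) : ℝ) := funext fun i => hb (f i)
  rw [← one_mulVec x, ← hinv, ← mulVec_mulVec, hBx]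
  exact (RingHom.map_mulVec (Int.castRingHom ℝ) _ _ j).symm

theorem exists_circulation_supported_on_fractional {E P : Type*} [Fintype E] [Fintype P]
    [DecidableEq P] (π η : E → P) (x : E → ℝ) {e₀ : E} (he₀ : ¬∃ z : ℤ, x e₀ = z) :
    ∃ D : E → ℝ, D ≠ 0 ∧ (∀ e, D e ≠ 0 → ¬∃ z : ℤ, x e = z) ∧
      ∀ v, (∃ z : ℤ, nodeSum π x v - nodeSum η x v = z) → nodeSum π D v = nodeSum η D v := by
  classical
  by_contra! hD
  let N : Matrix ({v // ∃ z : ℤ, nodeSum π x v - nodeSum η x v = z} ⊕ {e // ∃ z : ℤ, x e = z})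
      E ℤ := (fromRows (incidence π η) 1).submatrix (Sum.map Subtype.val Subtype.val) id
  have hN : N.IsTotallyUnimodular :=
    ((fromRows_one_isTotallyUnimodular_iff _).2 (incidence_isTotallyUnimodular π η)).submatrix _ _
  have hrow : ∀ y k, (N.map (Int.cast : ℤ → ℝ) *ᵥ y) k =
      Sum.elim (fun v => nodeSum π y v.1 - nodeSum η y v.1) (fun e => y e.1) k := by
    rintro y (v | e)
    · exact incidence_map_mulVec π η y v
    · simp [N, mulVec, dotProduct, one_apply]
  refine he₀ (hN.exists_intCast_eq (fun d hd => ?_) (fun k => ?_) e₀)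
  · by_contra hd0
    obtain ⟨v, hv, hne⟩ := hD d hd0 fun e he z hz => he (by
      simpa [hrow] using congrFun hd (Sum.inr ⟨e, z, hz⟩))
    exact hne (sub_eq_zero.1 (by simpa [hrow] using congrFun hd (Sum.inl ⟨v, hv⟩)))
  · rcases k with v | e
    exacts [(hrow x _).symm ▸ v.2, (hrow x _).symm ▸ e.2]

noncomputable def hitTime (y s : ℝ) : ℝ :=
  if 0 < s then (⌊y⌋ + 1 - y) / s else (⌊y⌋ - y) / s

lemma floor_lt_self_of_not_intCast {y : ℝ} (hy : ¬∃ z : ℤ, y = z) : (⌊y⌋ : ℝ) < y :=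
  (Int.floor_le y).lt_of_ne fun h => hy ⟨⌊y⌋, h.symm⟩

lemma hitTime_pos {y s : ℝ} (hs : s ≠ 0) (hy : ¬∃ z : ℤ, y = z) : 0 < hitTime y s := by
  unfold hitTime
  split_ifs with h
  · exact div_pos (by linarith [Int.lt_floor_add_one y]) h
  · exact div_pos_of_neg_of_neg (by linarith [floor_lt_self_of_not_intCast hy])
      (lt_of_le_of_ne (not_lt.1 h) hs)

lemma exists_add_hitTime_mul_eq {y s : ℝ} (hs : s ≠ 0) : ∃ z : ℤ, y + hitTime y s * s = z := by
  unfold hitTime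
  split_ifs
  · exact ⟨⌊y⌋ + 1, by field_simp; push_cast; ring⟩
  · exact ⟨⌊y⌋, by field_simp; ring⟩

lemma add_mul_mem_floor_Icc {y s t : ℝ} (ht₀ : 0 ≤ t) (ht : t ≤ hitTime y s) :
    y + t * s ∈ Set.Icc (⌊y⌋ : ℝ) (⌊y⌋ + 1) := by
  have hfl := Int.floor_le y
  have hlt := Int.lt_floor_add_one y
  unfold hitTime at ht
  split_ifs at ht with h
  · have : t * s ≤ ⌊y⌋ + 1 - y := (le_div_iff₀ h).1 ht
    constructor <;> nlinarith
  · rcases (not_lt.1 h).lt_or_eq with h | h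
    · have : ⌊y⌋ - y ≤ t * s := (le_div_iff_of_neg h).1 ht
      constructor <;> nlinarith
    · simp [h, hfl, hlt.le]

theorem exists_hitting_time {κ : Type*} [Finite κ] (y s : κ → ℝ) (hs : s ≠ 0)
    (hfrac : ∀ k, s k ≠ 0 → ¬∃ z : ℤ, y k = z) :
    ∃ t > 0, (∀ k, y k + t * s k ∈ Set.Icc (⌊y k⌋ : ℝ) (⌊y k⌋ + 1)) ∧
      {k | ¬∃ z : ℤ, y k + t * s k = z}.ncard < {k | ¬∃ z : ℤ, y k = z}.ncard := by
  obtain ⟨k₀, hk₀ : s k₀ ≠ 0⟩ := Function.ne_iff.1 hs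
  obtain ⟨k₁, hk₁ : s k₁ ≠ 0, hmin⟩ := Set.exists_min_image {k | s k ≠ 0}
    (fun k => hitTime (y k) (s k)) (Set.toFinite _) ⟨k₀, hk₀⟩
  have ht := hitTime_pos hk₁ (hfrac k₁ hk₁)
  refine ⟨_, ht, fun k => ?_, Set.ncard_lt_ncard ⟨fun k hk => ?_, fun hsub => ?_⟩⟩
  · by_cases hk : s k = 0
    · simp [hk, Int.floor_le, (Int.lt_floor_add_one _).le]
    · exact add_mul_mem_floor_Icc ht.le (hmin k hk)
  · by_cases hk' : s k = 0
    · simpa [hk'] using hk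
    · exact hfrac k hk'
  · exact hsub (hfrac k₁ hk₁) (exists_add_hitTime_mul_eq hk₁)

lemma floor_Icc_subset_Icc {y : ℝ} {n : ℕ} (h₀ : 0 ≤ y) (hn : y ≤ n) (hy : ¬∃ z : ℤ, y = z) :
    Set.Icc (⌊y⌋ : ℝ) (⌊y⌋ + 1) ⊆ Set.Icc 0 n := by
  have hlt : ⌊y⌋ < (n : ℤ) :=
    Int.floor_lt.2 (by exact_mod_cast hn.lt_of_ne fun h => hy ⟨n, by exact_mod_cast h⟩)
  refine Set.Icc_subset_Icc (by exact_mod_cast Int.floor_nonneg.2 h₀) ?_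
  exact_mod_cast Int.add_one_le_iff.2 hlt

lemma exists_affine_on_floor_Icc {φ : ℝ → ℝ}
    (hφ : ∀ k : ℕ, ∃ a b : ℝ, ∀ y ∈ Set.Icc (k : ℝ) (k + 1), φ y = a * y + b) {ℓ : ℝ} (hℓ : 0 ≤ ℓ) :
    ∃ a b : ℝ, ∀ y ∈ Set.Icc (⌊ℓ⌋ : ℝ) (⌊ℓ⌋ + 1), φ y = a * y + b := by
  rw [← natCast_floor_eq_intCast_floor hℓ]
  exact hφ ⌊ℓ⌋₊

section Flow

variable {V E : Type*} [Fintype E] [DecidableEq V] (tail head : E → V)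

def IsFeasibleFlow (S : Finset V) (r : V → ℕ) (u : E → ℕ) (x : E → ℝ) : Prop :=
  (∀ i ∈ S, nodeSum tail x i - nodeSum head x i = r i) ∧ ∀ e, 0 ≤ x e ∧ x e ≤ u e

def flowCost [Fintype V] (c : E → ℝ) (w : ℝ) (φ : V → ℝ → ℝ) (x : E → ℝ) : ℝ :=
  (1 - w) * ∑ e, c e * x e + w * ∑ i, φ i (nodeSum tail x i)

def flowsAndLoads (x : E → ℝ) : E ⊕ V → ℝ := Sum.elim x (nodeSum tail x)

noncomputable def numFractional (x : E → ℝ) : ℕ :=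
  {k | ¬∃ z : ℤ, flowsAndLoads tail x k = z}.ncard

lemma flowsAndLoads_add_smul (x D : E → ℝ) (t : ℝ) (k : E ⊕ V) :
    flowsAndLoads tail (x + t • D) k = flowsAndLoads tail x k + t * flowsAndLoads tail D k := by
  rcases k with e | i
  · simp [flowsAndLoads]
  · exact nodeSum_add_smul tail x D t i

open Classical in
noncomputable def inPort (B : Set V) (i : V) : V ⊕ V := if i ∈ B then .inr i else .inl i

variable {tail head}

lemma nodeSum_inl_comp_inl (y : E → ℝ) (i : V) :
    nodeSum (Sum.inl ∘ tail) y (.inl i : V ⊕ V) = nodeSum tail y i := by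
  simp [nodeSum]

lemma nodeSum_inl_comp_inr (y : E → ℝ) (i : V) :
    nodeSum (Sum.inl ∘ tail) y (.inr i : V ⊕ V) = 0 := by
  simp [nodeSum]

lemma nodeSum_inPort_comp_inl {B : Set V} (y : E → ℝ) {i : V} (hi : i ∉ B) :
    nodeSum (inPort B ∘ head) y (.inl i) = nodeSum head y i := by
  unfold nodeSum inPort
  congr 1
  ext e
  by_cases h : head e ∈ B <;> simp [h]
  rintro rfl
  exact hi h

lemma nodeSum_inPort_comp_inl_of_mem {B : Set V} (y : E → ℝ) {i : V} (hi : i ∈ B) :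
    nodeSum (inPort B ∘ head) y (.inl i) = 0 := by
  unfold nodeSum inPort
  refine sum_eq_zero fun e he => absurd he ?_
  by_cases h : head e ∈ B <;> simp [h]
  rintro rfl
  exact h hi

lemma nodeSum_inPort_comp_inr {B : Set V} (y : E → ℝ) {i : V} (hi : i ∈ B) :
    nodeSum (inPort B ∘ head) y (.inr i) = nodeSum head y i := by
  unfold nodeSum inPort
  congr 1
  ext e
  by_cases h : head e ∈ B <;> simp [h]
  rintro rfl
  exact h hi

/-- Splitting a node with integral load into an outflow and an inflow port turns the constraint
"the load does not change" into a port constraint. -/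
lemma exists_feasible_direction [Fintype V] {S : Finset V} {r : V → ℕ} {x : E → ℝ}
    (hcons : ∀ i ∈ S, nodeSum tail x i - nodeSum head x i = r i) {e₀ : E}
    (he₀ : ¬∃ z : ℤ, x e₀ = z) :
    ∃ D : E → ℝ, D ≠ 0 ∧ (∀ e, D e ≠ 0 → ¬∃ z : ℤ, x e = z) ∧
      (∀ i ∈ S, nodeSum tail D i = nodeSum head D i) ∧
      ∀ i, (∃ z : ℤ, nodeSum tail x i = z) → nodeSum tail D i = 0 := by
  set B := {i | ∃ z : ℤ, nodeSum tail x i = z}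
  obtain ⟨D, hD0, hsupp, hport⟩ :=
    exists_circulation_supported_on_fractional (Sum.inl ∘ tail) (inPort B ∘ head) x he₀
  have hload : ∀ i ∈ B, nodeSum tail D i = 0 := by
    intro i hi
    have h := hport (.inl i) (by rwa [nodeSum_inl_comp_inl, nodeSum_inPort_comp_inl_of_mem _ hi,
      sub_zero])
    rwa [nodeSum_inl_comp_inl, nodeSum_inPort_comp_inl_of_mem _ hi] at h
  refine ⟨D, hD0, hsupp, fun i hi => ?_, hload⟩
  by_cases hiB : i ∈ B
  · have ⟨z, hz⟩ := hiB
    have h := hport (.inr i) ⟨r i - z, by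
      rw [nodeSum_inl_comp_inr, nodeSum_inPort_comp_inr _ hiB]
      push_cast
      linarith [hcons i hi]⟩
    rw [nodeSum_inl_comp_inr, nodeSum_inPort_comp_inr _ hiB] at h
    rw [hload i hiB, ← h]
  · have h := hport (.inl i) ⟨r i, by
      rw [nodeSum_inl_comp_inl, nodeSum_inPort_comp_inl _ hiB]
      exact_mod_cast hcons i hi⟩
    rwa [nodeSum_inl_comp_inl, nodeSum_inPort_comp_inl _ hiB] at h

variable {S : Finset V} {r : V → ℕ} {u : E → ℕ}

lemma IsFeasibleFlow.add_smul {x D : E → ℝ} (hx : IsFeasibleFlow tail head S r u x)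
    (hdiv : ∀ i ∈ S, nodeSum tail D i = nodeSum head D i)
    (hsupp : ∀ e, D e ≠ 0 → ¬∃ z : ℤ, x e = z) {t : ℝ}
    (hcell : ∀ e, x e + t * D e ∈ Set.Icc (⌊x e⌋ : ℝ) (⌊x e⌋ + 1)) :
    IsFeasibleFlow tail head S r u (x + t • D) := by
  refine ⟨fun i hi => ?_, fun e => ?_⟩
  · rw [nodeSum_add_smul, nodeSum_add_smul, hdiv i hi, ← hx.1 i hi]
    ring
  · by_cases he : D e = 0
    · simpa [he] using hx.2 e
    · simpa using floor_Icc_subset_Icc (hx.2 e).1 (hx.2 e).2 (hsupp e he) (hcell e)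

lemma flowCost_add_smul [Fintype V] (c : E → ℝ) (w : ℝ) {φ : V → ℝ → ℝ} {x D : E → ℝ}
    {a b : V → ℝ} (hab : ∀ i, ∀ y ∈ Set.Icc (⌊nodeSum tail x i⌋ : ℝ) (⌊nodeSum tail x i⌋ + 1),
      φ i y = a i * y + b i) {t : ℝ}
    (hcell : ∀ i, nodeSum tail x i + t * nodeSum tail D i ∈
      Set.Icc (⌊nodeSum tail x i⌋ : ℝ) (⌊nodeSum tail x i⌋ + 1)) :
    flowCost tail c w φ (x + t • D) = flowCost tail c w φ x +
      t * ((1 - w) * ∑ e, c e * D e + w * ∑ i, a i * nodeSum tail D i) := by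
  have hφ : ∀ i, φ i (nodeSum tail (x + t • D) i) =
      φ i (nodeSum tail x i) + t * (a i * nodeSum tail D i) := by
    intro i
    rw [nodeSum_add_smul, hab i _ (hcell i),
      hab i _ ⟨Int.floor_le _, (Int.lt_floor_add_one _).le⟩]
    ring
  have hlin : ∑ e, c e * (x + t • D) e = ∑ e, c e * x e + t * ∑ e, c e * D e := by
    rw [mul_sum, ← sum_add_distrib]
    exact sum_congr rfl fun e _ => by simp only [Pi.add_apply, Pi.smul_apply, smul_eq_mul]; ring
  simp only [flowCost, hφ, hlin, sum_add_distrib, ← mul_sum]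
  ring

variable [Fintype V] {c : E → ℝ} {w : ℝ} {φ : V → ℝ → ℝ}

theorem IsFeasibleFlow.exists_cost_le_numFractional_lt
    (hφ : ∀ i, ∀ k : ℕ, ∃ a b : ℝ, ∀ y ∈ Set.Icc (k : ℝ) (k + 1), φ i y = a * y + b)
    {x : E → ℝ} (hx : IsFeasibleFlow tail head S r u x) {e₀ : E} (he₀ : ¬∃ z : ℤ, x e₀ = z) :
    ∃ x', IsFeasibleFlow tail head S r u x' ∧ flowCost tail c w φ x' ≤ flowCost tail c w φ x ∧
      numFractional tail x' < numFractional tail x := by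
  obtain ⟨D, hD0, hsupp, hdiv, hload⟩ := exists_feasible_direction hx.1 he₀
  choose a b hab using fun i =>
    exists_affine_on_floor_Icc (hφ i) (sum_nonneg fun e _ => (hx.2 e).1 : 0 ≤ nodeSum tail x i)
  set σ := (1 - w) * ∑ e, c e * D e + w * ∑ i, a i * nodeSum tail D i
  set y := flowsAndLoads tail x
  set s := flowsAndLoads tail D
  -- as long as no coordinate of `y` crosses an integer, the cost is affine along `x + t • D`
  have hmove : ∀ t, (∀ k, y k + t * s k ∈ Set.Icc (⌊y k⌋ : ℝ) (⌊y k⌋ + 1)) →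
      {k | ¬∃ z : ℤ, y k + t * s k = z}.ncard < {k | ¬∃ z : ℤ, y k = z}.ncard →
      ∃ x', IsFeasibleFlow tail head S r u x' ∧
        flowCost tail c w φ x' = flowCost tail c w φ x + t * σ ∧
        numFractional tail x' < numFractional tail x := fun t hcell hcount =>
    ⟨x + t • D, hx.add_smul hdiv hsupp fun e => hcell (.inl e),
      flowCost_add_smul c w hab fun i => hcell (.inr i),
      by simpa only [numFractional, flowsAndLoads_add_smul] using hcount⟩
  have hs : s ≠ 0 := fun h => hD0 (funext fun e => congrFun h (.inl e))
  have hfrac : ∀ k, s k ≠ 0 → ¬∃ z : ℤ, y k = z := by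
    rintro (e | i) hk
    exacts [hsupp e hk, fun hi => hk (hload i hi)]
  rcases le_total σ 0 with hσ | hσ
  · obtain ⟨t, ht, hcell, hcount⟩ := exists_hitting_time y s hs hfrac
    obtain ⟨x', hx', hcost, hlt⟩ := hmove t hcell hcount
    exact ⟨x', hx', by nlinarith, hlt⟩
  · obtain ⟨t, ht, hcell, hcount⟩ :=
      exists_hitting_time y (-s) (neg_ne_zero.2 hs) (by simpa using hfrac)
    obtain ⟨x', hx', hcost, hlt⟩ := hmove (-t) (by simpa using hcell) (by simpa using hcount)
    exact ⟨x', hx', by nlinarith, hlt⟩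

theorem IsFeasibleFlow.exists_integral_cost_le
    (hφ : ∀ i, ∀ k : ℕ, ∃ a b : ℝ, ∀ y ∈ Set.Icc (k : ℝ) (k + 1), φ i y = a * y + b)
    {x : E → ℝ} (hx : IsFeasibleFlow tail head S r u x) :
    ∃ x', IsFeasibleFlow tail head S r u x' ∧ (∀ e, ∃ z : ℤ, x' e = z) ∧
      flowCost tail c w φ x' ≤ flowCost tail c w φ x := by
  induction hn : numFractional tail x using Nat.strong_induction_on generalizing x with
  | _ n ih =>
  by_cases hint : ∀ e, ∃ z : ℤ, x e = z
  · exact ⟨x, hx, hint, le_rfl⟩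
  · push Not at hint
    obtain ⟨e₀, he₀⟩ := hint
    obtain ⟨x', hx', hle, hlt⟩ :=
      hx.exists_cost_le_numFractional_lt hφ (fun ⟨z, hz⟩ => he₀ z hz)
    obtain ⟨x'', hx'', hint, hle'⟩ := ih _ (hn ▸ hlt) hx' rfl
    exact ⟨x'', hx'', hint, hle'.trans hle⟩

end Flow

lemma finite_setOf_intCast_mem_Icc {E : Type*} [Finite E] (u : E → ℕ) :
    {x : E → ℝ | (∀ e, 0 ≤ x e ∧ x e ≤ u e) ∧ ∀ e, ∃ z : ℤ, x e = z}.Finite := by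
  refine (Set.Finite.pi fun e => (Set.finite_Icc 0 (u e : ℤ)).image Int.cast).subset ?_
  rintro x ⟨hbox, hint⟩ e -
  obtain ⟨z, hz⟩ := hint e
  obtain ⟨h₀, hu⟩ := hbox e
  rw [hz] at h₀ hu
  exact ⟨z, ⟨by exact_mod_cast h₀, by exact_mod_cast hu⟩, hz.symm⟩

lemma exists_forall_le_of_finite_of_forall_exists_le {α β : Type*} [LinearOrder β] {K Z : Set α}
    (f : α → β) (hZ : Z.Finite) (hK : K.Nonempty) (hdom : ∀ y ∈ K, ∃ z ∈ Z, f z ≤ f y) :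
    ∃ x ∈ Z, ∀ y ∈ K, f x ≤ f y := by
  obtain ⟨z₀, hz₀, -⟩ := hdom _ hK.some_mem
  obtain ⟨x, hx, hmin⟩ := Set.exists_min_image Z f hZ ⟨z₀, hz₀⟩
  refine ⟨x, hx, fun y hy => ?_⟩
  obtain ⟨z, hz, hzy⟩ := hdom y hy
  exact (hmin z hz).trans hzy

theorem exists_integral_optimal_general {V E : Type*} [Fintype V] [Fintype E] [DecidableEq V]
    (tail head : E → V) (S : Finset V) (r : V → ℕ) (u : E → ℕ)
    (c : E → ℝ) (w : ℝ)
    (φ : V → ℝ → ℝ)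
    (hφpl : ∀ i, ∀ k : ℕ, ∃ a b : ℝ,
      ∀ y ∈ Set.Icc (k : ℝ) ((k : ℝ) + 1), φ i y = a * y + b)
    (K : Set (E → ℝ))
    (hK : K = {x : E → ℝ |
        (∀ i ∈ S, (∑ e ∈ univ.filter (fun e => tail e = i), x e)
          - (∑ e ∈ univ.filter (fun e => head e = i), x e) = (r i : ℝ)) ∧
        ∀ e, 0 ≤ x e ∧ x e ≤ (u e : ℝ)})
    (hne : K.Nonempty)
    (F : (E → ℝ) → ℝ)
    (hF : F = fun x => (1 - w) * ∑ e, c e * x e +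
      w * ∑ i, φ i (∑ e ∈ univ.filter (fun e => tail e = i), x e)) :
    ∃ x ∈ K, (∀ y ∈ K, F x ≤ F y) ∧ ∀ e, ∃ z : ℤ, x e = (z : ℝ) := by
  have hK' : K = {x | IsFeasibleFlow tail head S r u x} := hK
  have hF' : F = flowCost tail c w φ := hF
  subst hK' hF'
  obtain ⟨x, ⟨hx, hint⟩, hmin⟩ := exists_forall_le_of_finite_of_forall_exists_le
    (Z := {x | IsFeasibleFlow tail head S r u x ∧ ∀ e, ∃ z : ℤ, x e = z}) (flowCost tail c w φ)
    ((finite_setOf_intCast_mem_Icc u).subset fun x hx => ⟨hx.1.2, hx.2⟩) hne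
    fun y hy => by
      obtain ⟨x, hx, hint, hle⟩ := hy.exists_integral_cost_le (c := c) (w := w) hφpl
      exact ⟨x, ⟨hx, hint⟩, hle⟩
  exact ⟨x, hx, hmin, hint⟩

/-- Integrality: with integer rates and capacities and piecewise-linear convex node penalties
with integral breakpoints, the balanced-routing objective admits an optimal solution in which
every edge flow is an integer. -/
theorem exists_integral_optimal {V E : Type*} [Fintype V] [Fintype E] [DecidableEq V]
    (tail head : E → V) (S : Finset V) (r : V → ℕ) (u : E → ℕ)
    (c : E → ℝ) (w : ℝ) (hw0 : 0 ≤ w) (hw1 : w ≤ 1)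
    (φ : V → ℝ → ℝ)
    (hφconv : ∀ i, ConvexOn ℝ (Set.Ici (0 : ℝ)) (φ i))
    (hφpl : ∀ i, ∀ k : ℕ, ∃ a b : ℝ,
      ∀ y ∈ Set.Icc (k : ℝ) ((k : ℝ) + 1), φ i y = a * y + b)
    (K : Set (E → ℝ))
    (hK : K = {x : E → ℝ |
        (∀ i ∈ S, (∑ e ∈ univ.filter (fun e => tail e = i), x e)
          - (∑ e ∈ univ.filter (fun e => head e = i), x e) = (r i : ℝ)) ∧
        ∀ e, 0 ≤ x e ∧ x e ≤ (u e : ℝ)})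
    (hne : K.Nonempty)
    (F : (E → ℝ) → ℝ)
    (hF : F = fun x => (1 - w) * ∑ e, c e * x e +
      w * ∑ i, φ i (∑ e ∈ univ.filter (fun e => tail e = i), x e)) :
    ∃ x ∈ K, (∀ y ∈ K, F x ≤ F y) ∧ ∀ e, ∃ z : ℤ, x e = (z : ℝ) :=
  exists_integral_optimal_general tail head S r u c w φ hφpl K hK hne F hF
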